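/- Fix m ∈ ℕ, m ≥ 2, and let g_m : [0,1] → [0,1] be the multiple-tent map. Let a : ℕ → ℕ be a digit sequence with a(i) < m for all i, and set x = Σ_{i=0}^{∞} a(i)/m^{i+1} ∈ [0,1]. Then: if a(0) is even, g_m(x) = Σ_{i=0}^{∞} a(i+1)/m^{i+1}; and if a(0) is odd, g_m(x) = Σ_{i=0}^{∞} (m−1−a(i+1))/m^{i+1}. That is, in base-m expansion, applying g_m shifts the digits left by one place, and additionally replaces each digit b by m−1−b when the leading digit is odd. -/

import Mathlib

/-- The multiple-tent map `g_m : [0,1] → [0,1]`, `g_m(x) = mx − 2j` on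
`[2j/m,(2j+1)/m]` and `g_m(x) = −mx + 2j` on `[(2j−1)/m, 2j/m]`; equivalently
`g_m(x) = 1 − |((mx) mod 2) − 1|`. -/
noncomputable def tentMap (m : ℕ) (x : ℝ) : ℝ :=
  1 - |2 * Int.fract ((m : ℝ) * x / 2) - 1|

/-!
Multiplying by `m` peels off the leading digit: `m x = a 0 + y`, where `y ∈ [0,1]` is the value of
the shifted expansion. The tent map only sees `m x` modulo `2`, so it returns `y` when `a 0` is even
and `1 - y` when it is odd; and `1 - y` is the value of the complemented digits `m - 1 - b`,
because the two expansions add up digitwise to `0.(m-1)(m-1)… = 1`.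
-/

namespace Real

theorem tsum_div_pow_eq_ofDigits {b : ℕ} (d : ℕ → Fin b) :
    ∑' i, ((d i : ℕ) : ℝ) / (b : ℝ) ^ (i + 1) = ofDigits d := by
  simp only [ofDigits, ofDigitsTerm, div_eq_mul_inv]

theorem mul_ofDigits {b : ℕ} (d : ℕ → Fin b) :
    b * ofDigits d = (d 0 : ℕ) + ofDigits (fun i ↦ d (i + 1)) := by
  have hb : (b : ℝ) ≠ 0 := mod_cast (Fin.pos (d 0)).ne'
  rw [ofDigits_eq_sum_add_ofDigits d 1]
  simp only [Finset.range_one, Finset.sum_singleton, ofDigitsTerm, zero_add, pow_one]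
  field_simp

theorem ofDigits_rev {b : ℕ} (hb : 1 < b) (d : ℕ → Fin b) :
    ofDigits (fun i ↦ (d i).rev) = 1 - ofDigits d := by
  rw [eq_sub_iff_add_eq, ← ofDigits_const_last_eq_one' hb, ofDigits, ofDigits, ofDigits,
    ← summable_ofDigitsTerm.tsum_add summable_ofDigitsTerm]
  congr 1
  funext i
  simp only [ofDigitsTerm, ← add_mul, Fin.val_rev]
  congr 1
  have := (d i).isLt
  norm_cast
  omega

end Real

theorem tentMap_eq_of_mul_eq_even {m n : ℕ} {x y : ℝ} (hn : Even n) (hx : m * x = n + y)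
    (hy₀ : 0 ≤ y) (hy₁ : y ≤ 1) : tentMap m x = y := by
  obtain ⟨k, rfl⟩ := hn
  have hfract : Int.fract ((m : ℝ) * x / 2) = y / 2 := by
    rw [hx, Int.fract_eq_iff]
    exact ⟨by linarith, by linarith, k, by push_cast; ring⟩
  rw [tentMap, hfract, abs_of_nonpos (by linarith)]
  ring

theorem tentMap_eq_of_mul_eq_odd {m n : ℕ} {x y : ℝ} (hn : Odd n) (hx : m * x = n + y)
    (hy₀ : 0 ≤ y) (hy₁ : y ≤ 1) : tentMap m x = 1 - y := by
  obtain ⟨k, rfl⟩ := hn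
  rcases hy₁.lt_or_eq with hy_lt | rfl
  · have hfract : Int.fract ((m : ℝ) * x / 2) = (1 + y) / 2 := by
      rw [hx, Int.fract_eq_iff]
      exact ⟨by linarith, by linarith, k, by push_cast; ring⟩
    rw [tentMap, hfract, abs_of_nonneg (by linarith)]
    ring
  · have hfract : Int.fract ((m : ℝ) * x / 2) = 0 := by
      rw [hx, Int.fract_eq_iff]
      exact ⟨le_rfl, one_pos, k + 1, by push_cast; ring⟩
    rw [tentMap, hfract]
    norm_num

/-- In base-`m` expansion `x = Σ a(i)/m^{i+1}` with digits
`a(i) < m`, applying the multiple-tent map `g_m` shifts the digits left by one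
place, and additionally replaces each digit `b` by `m−1−b` when the leading digit
`a(0)` is odd. -/
theorem tentMap_digit_shift (m : ℕ) (hm : 2 ≤ m) (a : ℕ → ℕ) (ha : ∀ i, a i < m) :
    (Even (a 0) →
      tentMap m (∑' i : ℕ, (a i : ℝ) / (m : ℝ) ^ (i + 1))
        = ∑' i : ℕ, (a (i + 1) : ℝ) / (m : ℝ) ^ (i + 1)) ∧
    (Odd (a 0) →
      tentMap m (∑' i : ℕ, (a i : ℝ) / (m : ℝ) ^ (i + 1))
        = ∑' i : ℕ, ((m - 1 - a (i + 1) : ℕ) : ℝ) / (m : ℝ) ^ (i + 1)) := by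
  set d : ℕ → Fin m := fun i ↦ ⟨a i, ha i⟩
  have hx := Real.tsum_div_pow_eq_ofDigits d
  have hshift := Real.tsum_div_pow_eq_ofDigits (fun i ↦ d (i + 1))
  have hrev := Real.tsum_div_pow_eq_ofDigits (fun i ↦ (d (i + 1)).rev)
  simp only [d, Fin.val_rev] at hx hshift hrev
  have hmx := Real.mul_ofDigits d
  have htail₀ := Real.ofDigits_nonneg (fun i ↦ d (i + 1))
  have htail₁ := Real.ofDigits_le_one (fun i ↦ d (i + 1))
  rw [hx]
  refine ⟨fun h ↦ ?_, fun h ↦ ?_⟩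
  · rw [tentMap_eq_of_mul_eq_even h hmx htail₀ htail₁, hshift]
  · rw [tentMap_eq_of_mul_eq_odd h hmx htail₀ htail₁, ← Real.ofDigits_rev hm, ← hrev]
    congr 1
    funext i
    congr 2
    omega
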